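/- arXiv:2506.19034 — 2 statements merged into one kernel-verified Lean document; each statement's English description precedes it below -/
import Mathlib

section
/- (Topological linearization.) Assume (H1), (H2⁰) and K·L < α. Then there exists a map H : I × X → X such that for all s, t ∈ I: (i) H(t,·) is a homeomorphism of X with H(t,0) = 0; (ii) the linear and the semilinear equations are conjugated: H(t, Φ(t,s)ξ) = φ(t, s, H(s,ξ)) for all ξ ∈ X; (iii) H(t,·) and its inverse are near the identity: ‖H(t,ξ) − ξ‖_t ≤ K·M/α and ‖H(t,·)⁻¹(η) − η‖_t ≤ K·M/α for all ξ, η ∈ X; (iv) H(t,·) and its inverse satisfy global Lipschitz conditions; (v) the maps H : I × X → X and (t,x) ↦ H(t,·)⁻¹(x) are continuous. -/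
/-!
The linear evolution `Φ` and the nonlinear flow `φ` are defined for all pairs of times in
`[τ₀, ∞)` and are invertible, so they are conjugated by transporting through the initial time:
`H t = φ(t, τ₀, ·) ∘ Φ(τ₀, t)` with inverse `Φ(t, τ₀) ∘ φ(τ₀, t, ·)`, and the conjugacy identity
is the cocycle property. Then `H t ξ - ξ = φ(t, τ₀, ζ) - Φ(t, τ₀) ζ` with `ζ = Φ(τ₀, t) ξ`, which
by variation of constants is `∫_{τ₀}^t Φ(t, r) F(r, φ(r, τ₀, ζ)) dr`; its `‖·‖_t`-norm is at most
`∫ K e^{-α(t - r)} M dr ≤ K M / α`, a seminorm of an integral being bounded through a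
Hahn–Banach functional. The inverse is treated in the same way with `ζ = φ(τ₀, t, η)`.
The Lipschitz bounds for `φ(t, s, ·)` come from Grönwall's inequality on the compact interval
between `s` and `t`.
-/

open Set MeasureTheory Real Filter Topology

theorem Seminorm.exists_strongDual_apply_eq_of_le_mul_norm {E : Type*} [NormedAddCommGroup E]
    [NormedSpace ℝ E] (p : Seminorm ℝ E) {C : ℝ} (hp : ∀ x, p x ≤ C * ‖x‖) (y : E) :
    ∃ g : StrongDual ℝ E, g y = p y ∧ ∀ x, g x ≤ p x := by
  let f := LinearPMap.mkSpanSingleton' (R := ℝ) (σ := RingHom.id ℝ) y (p y) fun c hc => by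
    rcases smul_eq_zero.1 hc with rfl | rfl <;> simp
  obtain ⟨g, hgf, hgp⟩ := Module.Dual.exists_extension_of_le_seminorm_real f.domain f.toFun
    (p := p) fun ⟨x, hx⟩ => by
      obtain ⟨c, rfl⟩ := Submodule.mem_span_singleton.1 hx
      calc f ⟨c • y, hx⟩ = c * p y := LinearPMap.mkSpanSingleton'_apply _ _ _ _ _
        _ ≤ |c| * p y := by gcongr; exact le_abs_self c
        _ = p (c • y) := by rw [map_smul_eq_mul, Real.norm_eq_abs]
  refine ⟨g.mkContinuous C fun x => (hgp x).trans (hp x), ?_,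
    fun x => (le_abs_self _).trans (hgp x)⟩
  have hy : y ∈ f.domain := Submodule.mem_span_singleton_self y
  exact (hgf ⟨y, hy⟩).trans (LinearPMap.mkSpanSingleton'_apply_self _ _ _ _)

theorem Seminorm.map_integral_le {E : Type*} [NormedAddCommGroup E] [NormedSpace ℝ E]
    [CompleteSpace E] {α : Type*} [MeasurableSpace α] {μ : Measure α} (p : Seminorm ℝ E) {C : ℝ}
    (hp : ∀ x, p x ≤ C * ‖x‖) {f : α → E} {g : α → ℝ} (hf : Integrable f μ) (hg : Integrable g μ)
    (hfg : ∀ᵐ a ∂μ, p (f a) ≤ g a) : p (∫ a, f a ∂μ) ≤ ∫ a, g a ∂μ := by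
  obtain ⟨g', hg', hg'p⟩ := p.exists_strongDual_apply_eq_of_le_mul_norm hp (∫ a, f a ∂μ)
  rw [← hg', ← g'.integral_comp_comm hf]
  exact integral_mono_ae (g'.integrable_comp hf) hg (hfg.mono fun a ha => (hg'p _).trans ha)

theorem integral_exp_neg_mul_sub_le {α s t : ℝ} (hα : 0 < α) :
    ∫ r in s..t, exp (-α * (t - r)) ≤ 1 / α := by
  have hderiv (r : ℝ) : HasDerivAt (fun r => exp (-α * (t - r)) / α) (exp (-α * (t - r))) r := by
    refine ((((hasDerivAt_id r).const_sub t).const_mul (-α)).exp.div_const α).congr_deriv ?_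
    simp [hα.ne']
  rw [intervalIntegral.integral_eq_sub_of_hasDerivAt (fun r _ => hderiv r)
    ((by fun_prop : Continuous _).intervalIntegrable _ _), sub_self, mul_zero, exp_zero]
  linarith [div_pos (exp_pos (-α * (t - s))) hα]

theorem Seminorm.intervalIntegral_le_of_le_mul_exp {E : Type*} [NormedAddCommGroup E]
    [NormedSpace ℝ E] [CompleteSpace E] (p : Seminorm ℝ E) {C : ℝ} (hp : ∀ x, p x ≤ C * ‖x‖)
    {f : ℝ → E} {s t c α : ℝ} (hα : 0 < α) (hc : 0 ≤ c) (hst : s ≤ t)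
    (hf : IntervalIntegrable f volume s t)
    (hfc : ∀ᵐ r, r ∈ Ioc s t → p (f r) ≤ c * exp (-α * (t - r))) :
    p (∫ r in s..t, f r) ≤ c / α := by
  have hexp : IntervalIntegrable (fun r => c * exp (-α * (t - r))) volume s t :=
    (by fun_prop : Continuous _).intervalIntegrable _ _
  calc p (∫ r in s..t, f r) ≤ ∫ r in s..t, c * exp (-α * (t - r)) := by
        rw [intervalIntegral.integral_of_le hst, intervalIntegral.integral_of_le hst]
        exact p.map_integral_le hp hf.1 hexp.1 ((ae_restrict_iff' measurableSet_Ioc).2 hfc)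
    _ ≤ c * (1 / α) := by
        rw [intervalIntegral.integral_const_mul]
        exact mul_le_mul_of_nonneg_left (integral_exp_neg_mul_sub_le hα) hc
    _ = c / α := mul_one_div c α

theorem tendsto_floor_mul_div (u : ℝ) :
    Tendsto (fun n : ℕ => (⌊u * (n + 1)⌋ : ℝ) / (n + 1)) atTop (𝓝 u) := by
  have hlow : Tendsto (fun n : ℕ => u - 1 / ((n : ℝ) + 1)) atTop (𝓝 u) := by
    simpa using (tendsto_const_nhds (x := u)).sub tendsto_one_div_add_atTop_nhds_zero_nat
  refine tendsto_of_tendsto_of_tendsto_of_le_of_le hlow tendsto_const_nhds (fun n => ?_) fun n => ?_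
  · rw [sub_le_iff_le_add, ← add_div, le_div_iff₀ (by positivity)]
    linarith [Int.sub_one_lt_floor (u * (n + 1))]
  · rw [div_le_iff₀ (by positivity)]
    exact Int.floor_le _

theorem aestronglyMeasurable_comp_of_ae_continuous {Z Y : Type*} [TopologicalSpace Z]
    [TopologicalSpace Y] [TopologicalSpace.PseudoMetrizableSpace Y] {μ : Measure ℝ}
    {F : ℝ → Z → Y} (hFm : ∀ z, StronglyMeasurable (F · z)) (hFc : ∀ᵐ t ∂μ, Continuous (F t))
    {c : ℝ → Z} (hc : Continuous c) : AEStronglyMeasurable (fun t => F t (c t)) μ := by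
  -- `c` is approximated by the step functions `t ↦ c (⌊t (n+1)⌋ / (n+1))`
  have hstep (n : ℕ) : StronglyMeasurable fun t => F t (c (⌊t * (n + 1)⌋ / (n + 1))) := by
    have := stronglyMeasurable_uncurry_of_continuous_of_stronglyMeasurable
      (u := fun (k : ℤ) t => F t (c (k / (n + 1)))) (fun _ => continuous_of_discreteTopology)
      fun k => hFm _
    exact this.comp_measurable (((measurable_id.mul_const _).floor).prodMk measurable_id)
  refine aestronglyMeasurable_of_tendsto_ae atTop (fun n => (hstep n).aestronglyMeasurable) ?_
  filter_upwards [hFc] with t ht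
  exact (ht.tendsto _).comp ((hc.tendsto t).comp (tendsto_floor_mul_div t))

theorem intervalIntegrable_clm_apply_comp {Z X Y : Type*} [TopologicalSpace Z]
    [NormedAddCommGroup X] [NormedSpace ℝ X] [NormedAddCommGroup Y] [NormedSpace ℝ Y]
    {A : ℝ → X →L[ℝ] Y} {F : ℝ → Z → X} {c : ℝ → Z} {a b B : ℝ}
    (hA : ContinuousOn A (uIcc a b)) (hc : ContinuousOn c (uIcc a b))
    (hFm : ∀ z, StronglyMeasurable (F · z)) (hFc : ∀ᵐ t, t ∈ uIoc a b → Continuous (F t))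
    (hFb : ∀ᵐ t, t ∈ uIoc a b → ∀ z, ‖F t z‖ ≤ B) :
    IntervalIntegrable (fun t => A t (F t (c t))) volume a b := by
  -- extend `c` continuously to `ℝ` by clamping the time to `[[a, b]]`
  set clamp : ℝ → ℝ := fun t => projIcc (min a b) (max a b) min_le_max t
  have hclamp : Continuous (c ∘ clamp) :=
    hc.comp_continuous (continuous_subtype_val.comp continuous_projIcc) fun t => Subtype.prop _
  have hFc' : AEStronglyMeasurable (fun t => F t (c (clamp t))) (volume.restrict (uIoc a b)) :=
    aestronglyMeasurable_comp_of_ae_continuous hFm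
      ((ae_restrict_iff' measurableSet_uIoc).2 hFc) hclamp
  obtain ⟨P, hP⟩ := isCompact_uIcc.exists_bound_of_continuousOn hA
  rw [intervalIntegrable_iff]
  refine Integrable.mono' (g := fun _ => P * B) (integrableOn_const measure_Ioc_lt_top.ne) ?_ ?_
  · refine (isBoundedBilinearMap_apply.continuous.comp_aestronglyMeasurable
      (((hA.mono uIoc_subset_uIcc).aestronglyMeasurable measurableSet_uIoc).prodMk hFc')).congr ?_
    filter_upwards [ae_restrict_mem measurableSet_uIoc] with t ht
    simp [clamp, projIcc_of_mem _ (uIoc_subset_uIcc ht)]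
  · filter_upwards [ae_restrict_mem measurableSet_uIoc, ae_restrict_of_ae hFb] with t ht hB
    exact ((A t).le_opNorm _).trans (mul_le_mul (hP t (uIoc_subset_uIcc ht)) (hB ht _)
      (norm_nonneg _) ((norm_nonneg _).trans (hP t (uIoc_subset_uIcc ht))))

theorem add_mul_gronwallBound_zero (A E x : ℝ) :
    A + E * gronwallBound 0 E A x = A * exp (E * x) := by
  rcases eq_or_ne E 0 with rfl | hE
  · simp
  · rw [gronwallBound_of_K_ne_0 hE]
    field_simp
    ring

theorem hasDerivWithinAt_integral_Icc {u : ℝ → ℝ} {a b x : ℝ} (hu : ContinuousOn u (Icc a b))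
    (hx : x ∈ Icc a b) : HasDerivWithinAt (fun r => ∫ y in a..r, u y) (u x) (Icc a b) x := by
  have : Fact (x ∈ Icc a b) := ⟨hx⟩
  exact intervalIntegral.integral_hasDerivWithinAt_right
    ((hu.mono (uIcc_subset_Icc (left_mem_Icc.2 (hx.1.trans hx.2)) hx)).intervalIntegrable)
    (hu.stronglyMeasurableAtFilter_nhdsWithin measurableSet_Icc x) (hu x hx)

theorem le_mul_exp_of_le_add_mul_integral {u : ℝ → ℝ} {a b A E : ℝ} (hE : 0 ≤ E)
    (hu : ContinuousOn u (Icc a b)) (h : ∀ r ∈ Icc a b, u r ≤ A + E * ∫ x in a..r, u x) :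
    ∀ r ∈ Icc a b, u r ≤ A * exp (E * (r - a)) := by
  have hv : ∀ r ∈ Icc a b, (∫ x in a..r, u x) ≤ gronwallBound 0 E A (r - a) :=
    le_gronwallBound_of_liminf_deriv_right_le
      (fun x hx => (hasDerivWithinAt_integral_Icc hu hx).continuousWithinAt)
      (fun x hx _ hr => ((hasDerivWithinAt_integral_Icc hu (Ico_subset_Icc_self hx))
        |>.mono_of_mem_nhdsWithin (Icc_mem_nhdsGE_of_mem hx)).liminf_right_slope_le hr)
      (by simp) fun x hx => by linarith [h x (Ico_subset_Icc_self hx)]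
  intro r hr
  calc u r ≤ A + E * ∫ x in a..r, u x := h r hr
    _ ≤ A + E * gronwallBound 0 E A (r - a) := by gcongr; exact hv r hr
    _ = A * exp (E * (r - a)) := add_mul_gronwallBound_zero A E _

theorem le_mul_exp_of_le_add_mul_integral_right {u : ℝ → ℝ} {a b A E : ℝ} (hE : 0 ≤ E)
    (hu : ContinuousOn u (Icc a b)) (h : ∀ r ∈ Icc a b, u r ≤ A + E * ∫ x in r..b, u x) :
    ∀ r ∈ Icc a b, u r ≤ A * exp (E * (b - r)) := by
  have hneg := le_mul_exp_of_le_add_mul_integral (u := fun x => u (-x)) (a := -b) (b := -a) hE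
    (hu.comp continuous_neg.continuousOn fun x hx => ⟨le_neg.1 hx.2, neg_le.1 hx.1⟩)
    fun r hr => by
      simpa [intervalIntegral.integral_comp_neg] using h (-r) ⟨le_neg.1 hr.2, neg_le.1 hr.1⟩
  intro r hr
  simpa [sub_eq_add_neg, add_comm] using hneg (-r) ⟨neg_le_neg hr.2, neg_le_neg hr.1⟩

theorem le_mul_exp_of_le_add_mul_abs_integral {u : ℝ → ℝ} {a b A E : ℝ} (hE : 0 ≤ E)
    (hu₀ : ∀ x, 0 ≤ u x) (hu : ContinuousOn u (uIcc a b))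
    (h : ∀ r ∈ uIcc a b, u r ≤ A + E * |∫ x in a..r, u x|) : u b ≤ A * exp (E * |b - a|) := by
  rcases le_total a b with hab | hba
  · rw [uIcc_of_le hab] at hu h
    rw [abs_of_nonneg (sub_nonneg.2 hab)]
    refine le_mul_exp_of_le_add_mul_integral hE hu (fun r hr => ?_) b (right_mem_Icc.2 hab)
    simpa [abs_of_nonneg (intervalIntegral.integral_nonneg hr.1 fun x _ => hu₀ x)] using h r hr
  · rw [uIcc_of_ge hba] at hu h
    rw [abs_of_nonpos (sub_nonpos.2 hba), neg_sub]
    refine le_mul_exp_of_le_add_mul_integral_right hE hu (fun r hr => ?_) b (left_mem_Icc.2 hba)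
    simpa [intervalIntegral.integral_symm r, abs_neg,
      abs_of_nonneg (intervalIntegral.integral_nonneg hr.2 fun x _ => hu₀ x)] using h r hr

structure IsEvolutionOn {α : Type*} (U : ℝ → ℝ → α → α) (I : Set ℝ) : Prop where
  apply_self : ∀ t ∈ I, ∀ x, U t t x = x
  apply_apply : ∀ t₀ ∈ I, ∀ t₁ ∈ I, ∀ t₂ ∈ I, ∀ x, U t₂ t₀ x = U t₂ t₁ (U t₁ t₀ x)

def evolutionConj {α : Type*} (U V : ℝ → ℝ → α → α) (τ₀ t : ℝ) (x : α) : α := V t τ₀ (U τ₀ t x)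

namespace IsEvolutionOn

variable {α : Type*} {U V : ℝ → ℝ → α → α} {I : Set ℝ} {τ₀ s t : ℝ}

theorem apply_apply_inv (hU : IsEvolutionOn U I) (hs : s ∈ I) (ht : t ∈ I) (x : α) :
    U s t (U t s x) = x := by
  rw [← hU.apply_apply s hs t ht s hs, hU.apply_self s hs]

theorem evolutionConj_evolutionConj (hU : IsEvolutionOn U I) (hV : IsEvolutionOn V I)
    (hτ₀ : τ₀ ∈ I) (ht : t ∈ I) (x : α) :
    evolutionConj V U τ₀ t (evolutionConj U V τ₀ t x) = x := by
  simp only [evolutionConj, hV.apply_apply_inv hτ₀ ht, hU.apply_apply_inv ht hτ₀]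

theorem evolutionConj_apply (hU : IsEvolutionOn U I) (hV : IsEvolutionOn V I) (hτ₀ : τ₀ ∈ I)
    (hs : s ∈ I) (ht : t ∈ I) (x : α) :
    evolutionConj U V τ₀ t (U t s x) = V t s (evolutionConj U V τ₀ s x) := by
  simp only [evolutionConj, ← hU.apply_apply s hs t ht τ₀ hτ₀, ← hV.apply_apply τ₀ hτ₀ s hs t ht]

theorem evolutionConj_sub_le [AddGroup α] {N : α → ℝ} {c : ℝ} (hU : IsEvolutionOn U I)
    (hτ₀ : τ₀ ∈ I) (ht : t ∈ I) (hUV : ∀ x, N (V t τ₀ x - U t τ₀ x) ≤ c) (x : α) :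
    N (evolutionConj U V τ₀ t x - x) ≤ c := by
  simpa only [evolutionConj, hU.apply_apply_inv ht hτ₀] using hUV (U τ₀ t x)

theorem evolutionConj_symm_sub_le [AddGroup α] {N : α → ℝ} {c : ℝ} (hN : ∀ x, N (-x) = N x)
    (hV : IsEvolutionOn V I) (hτ₀ : τ₀ ∈ I) (ht : t ∈ I) (hUV : ∀ x, N (V t τ₀ x - U t τ₀ x) ≤ c)
    (x : α) : N (evolutionConj V U τ₀ t x - x) ≤ c := by
  rw [← hN, neg_sub]
  simpa only [evolutionConj, hV.apply_apply_inv ht hτ₀] using hUV (V τ₀ t x)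

theorem of_clm {X : Type*} [NormedAddCommGroup X] [NormedSpace ℝ X] {Φ : ℝ → ℝ → X →L[ℝ] X}
    (hid : ∀ t ∈ I, Φ t t = ContinuousLinearMap.id ℝ X)
    (hcomp : ∀ t ∈ I, ∀ r ∈ I, ∀ s ∈ I, Φ t s = (Φ t r).comp (Φ r s)) :
    IsEvolutionOn (fun t s => ⇑(Φ t s)) I :=
  ⟨fun t ht x => by simp [hid t ht], fun s hs r hr t ht x => by simp [hcomp t ht r hr s hs]⟩

end IsEvolutionOn

theorem continuousOn_evolutionConj {α : Type*} [TopologicalSpace α] {U V : ℝ → ℝ → α → α}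
    {I : Set ℝ} {τ₀ : ℝ}
    (hU : ContinuousOn (fun p : ℝ × ℝ × α => U p.1 p.2.1 p.2.2) (I ×ˢ I ×ˢ univ))
    (hV : ContinuousOn (fun p : ℝ × ℝ × α => V p.1 p.2.1 p.2.2) (I ×ˢ I ×ˢ univ)) (hτ₀ : τ₀ ∈ I) :
    ContinuousOn (fun p : ℝ × α => evolutionConj U V τ₀ p.1 p.2) (I ×ˢ univ) := by
  have hU' : ContinuousOn (fun p : ℝ × α => U τ₀ p.1 p.2) (I ×ˢ univ) :=
    hU.comp (continuousOn_const.prodMk continuousOn_id) fun p hp => ⟨hτ₀, hp⟩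
  exact hV.comp (continuousOn_fst.prodMk (continuousOn_const.prodMk hU'))
    fun p hp => ⟨hp.1, hτ₀, mem_univ _⟩

theorem continuousOn_clm_apply_uncurry {X : Type*} [NormedAddCommGroup X] [NormedSpace ℝ X]
    {Φ : ℝ → ℝ → X →L[ℝ] X} {I : Set ℝ} (hΦ : ContinuousOn (fun p : ℝ × ℝ => Φ p.1 p.2) (I ×ˢ I)) :
    ContinuousOn (fun p : ℝ × ℝ × X => Φ p.1 p.2.1 p.2.2) (I ×ˢ I ×ˢ univ) :=
  (hΦ.comp (continuousOn_fst.prodMk continuousOn_snd.fst) fun _ hp => ⟨hp.1, hp.2.1⟩).clm_apply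
    continuousOn_snd.snd

theorem exists_lipschitzWith_evolutionConj {α : Type*} [PseudoEMetricSpace α]
    {U V : ℝ → ℝ → α → α} {I : Set ℝ} {τ₀ t : ℝ}
    (hU : ∀ s ∈ I, ∀ t ∈ I, ∃ K, LipschitzWith K (U t s))
    (hV : ∀ s ∈ I, ∀ t ∈ I, ∃ K, LipschitzWith K (V t s)) (hτ₀ : τ₀ ∈ I) (ht : t ∈ I) :
    ∃ K, LipschitzWith K (evolutionConj U V τ₀ t) := by
  obtain ⟨K₁, h₁⟩ := hU t ht τ₀ hτ₀
  obtain ⟨K₂, h₂⟩ := hV τ₀ hτ₀ t ht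
  exact ⟨K₂ * K₁, h₂.comp h₁⟩

theorem LipschitzWith.exists_le_mul_norm_sub {E F : Type*} [SeminormedAddCommGroup E]
    [SeminormedAddCommGroup F] {N : F → ℝ} {c : ℝ} (hc : 0 ≤ c) (hN : ∀ y, N y ≤ c * ‖y‖)
    {f : E → F} {K : NNReal} (hf : LipschitzWith K f) :
    ∃ L, 0 ≤ L ∧ ∀ x y, N (f x - f y) ≤ L * ‖x - y‖ :=
  ⟨c * K, by positivity, fun x y => (hN _).trans <| by
    rw [mul_assoc]; exact mul_le_mul_of_nonneg_left (hf.norm_sub_le x y) hc⟩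

section NormEquiv

variable {X : Type*} [NormedAddCommGroup X] {τ₀ : ℝ} {Nt : ℝ → X → ℝ} {F : ℝ → X → X}

theorem exists_uniform_norm_equiv {ℓ : ℝ → ℝ} (hℓpos : ∀ t ∈ Ici τ₀, 0 < ℓ t)
    (hℓloc : ∀ a b : ℝ, ∃ C : ℝ, ∀ t ∈ Icc a b ∩ Ici τ₀, ℓ t ≤ C)
    (hNequiv : ∀ t ∈ Ici τ₀, ∀ x : X, (1 / ℓ t) * ‖x‖ ≤ Nt t x ∧ Nt t x ≤ ℓ t * ‖x‖) (T : ℝ) :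
    ∃ C, 0 ≤ C ∧ ∀ t ∈ Icc τ₀ T, ∀ x, ‖x‖ ≤ C * Nt t x ∧ Nt t x ≤ C * ‖x‖ := by
  obtain ⟨C, hC⟩ := hℓloc τ₀ T
  refine ⟨max C 0, le_max_right C 0, fun t ht x => ?_⟩
  have hℓ : ℓ t ≤ max C 0 := (hC t ⟨ht, ht.1⟩).trans (le_max_left C 0)
  have hℓ₀ := hℓpos t ht.1
  obtain ⟨hlow, hup⟩ := hNequiv t ht.1 x
  have hN₀ : 0 ≤ Nt t x := (by positivity : 0 ≤ 1 / ℓ t * ‖x‖).trans hlow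
  constructor
  · calc ‖x‖ ≤ ℓ t * Nt t x := by rwa [one_div, inv_mul_le_iff₀ hℓ₀] at hlow
      _ ≤ max C 0 * Nt t x := by gcongr
  · exact hup.trans (by gcongr)

theorem exists_ae_norm_le {M : ℝ}
    (hequiv : ∀ T, ∃ C, 0 ≤ C ∧ ∀ t ∈ Icc τ₀ T, ∀ x, ‖x‖ ≤ C * Nt t x ∧ Nt t x ≤ C * ‖x‖)
    (hFM : ∀ᵐ t ∂volume.restrict (Ici τ₀), ∀ x, Nt t (F t x) ≤ M) (T : ℝ) :
    ∃ B, ∀ᵐ t, t ∈ Icc τ₀ T → ∀ x, ‖F t x‖ ≤ B := by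
  obtain ⟨C, hC₀, hC⟩ := hequiv T
  refine ⟨C * M, ((ae_restrict_iff' measurableSet_Ici).1 hFM).mono fun t hM ht x => ?_⟩
  exact (hC t ht _).1.trans (mul_le_mul_of_nonneg_left (hM ht.1 x) hC₀)

theorem exists_ae_lipschitzWith {L : ℝ} (hL : 0 ≤ L)
    (hequiv : ∀ T, ∃ C, 0 ≤ C ∧ ∀ t ∈ Icc τ₀ T, ∀ x, ‖x‖ ≤ C * Nt t x ∧ Nt t x ≤ C * ‖x‖)
    (hFL : ∀ᵐ t ∂volume.restrict (Ici τ₀), ∀ x y, Nt t (F t x - F t y) ≤ L * Nt t (x - y))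
    (T : ℝ) : ∃ K, ∀ᵐ t, t ∈ Icc τ₀ T → LipschitzWith K (F t) := by
  obtain ⟨C, hC₀, hC⟩ := hequiv T
  refine ⟨(C * L * C).toNNReal, ((ae_restrict_iff' measurableSet_Ici).1 hFL).mono
    fun t hL' ht => LipschitzWith.of_dist_le' fun x y => ?_⟩
  rw [dist_eq_norm, dist_eq_norm]
  calc ‖F t x - F t y‖ ≤ C * Nt t (F t x - F t y) := (hC t ht _).1
    _ ≤ C * (L * (C * ‖x - y‖)) := by
        gcongr
        exact (hL' ht.1 x y).trans (mul_le_mul_of_nonneg_left (hC t ht _).2 hL)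
    _ = C * L * C * ‖x - y‖ := by ring

end NormEquiv

section VariationOfConstants

variable {X : Type*} [NormedAddCommGroup X] [NormedSpace ℝ X] {τ₀ : ℝ}
  {Φ : ℝ → ℝ → X →L[ℝ] X} {F : ℝ → X → X} {sol : ℝ → ℝ → X → X}

theorem flow_apply_zero (hF0 : ∀ᵐ r ∂volume.restrict (Ici τ₀), F r 0 = 0)
    (huniq : ∀ τ ∈ Ici τ₀, ∀ x : ℝ → X, ContinuousOn x (Ici τ₀) →
      (∀ t ∈ Ici τ₀, x t = Φ t τ (x τ) + ∫ r in τ..t, Φ t r (F r (x r))) →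
      ∀ t ∈ Ici τ₀, x t = sol t τ (x τ))
    {s t : ℝ} (hs : s ∈ Ici τ₀) (ht : t ∈ Ici τ₀) : sol t s 0 = 0 := by
  refine (huniq s hs (fun _ => 0) continuousOn_const (fun t ht => ?_) t ht).symm
  have hI : ∫ r in s..t, Φ t r (F r 0) = 0 := by
    refine (intervalIntegral.integral_congr_ae ?_).trans intervalIntegral.integral_zero
    filter_upwards [(ae_restrict_iff' measurableSet_Ici).1 hF0] with r hr hrst
    rw [hr ((ordConnected_Ici.uIcc_subset hs ht) (uIoc_subset_uIcc hrst)), map_zero]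
  rw [map_zero, hI, add_zero]

theorem intervalIntegrable_evolution_apply_comp
    (hΦcont : ContinuousOn (fun p : ℝ × ℝ => Φ p.1 p.2) (Ici τ₀ ×ˢ Ici τ₀))
    (hFm : ∀ x, StronglyMeasurable (F · x))
    (hFc : ∀ᵐ t ∂volume.restrict (Ici τ₀), Continuous (F t))
    (hFb : ∀ T, ∃ B, ∀ᵐ t, t ∈ Icc τ₀ T → ∀ x, ‖F t x‖ ≤ B)
    {a b t : ℝ} (ha : a ∈ Ici τ₀) (hb : b ∈ Ici τ₀) (ht : t ∈ Ici τ₀) {x : ℝ → X}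
    (hx : ContinuousOn x (uIcc a b)) :
    IntervalIntegrable (fun r => Φ t r (F r (x r))) volume a b := by
  have hJ : uIcc a b ⊆ Icc τ₀ (max a b) :=
    uIcc_subset_Icc ⟨ha, le_max_left a b⟩ ⟨hb, le_max_right a b⟩
  obtain ⟨B, hB⟩ := hFb (max a b)
  exact intervalIntegrable_clm_apply_comp
    (hΦcont.comp (continuousOn_const.prodMk continuousOn_id) fun r hr => ⟨ht, (hJ hr).1⟩) hx hFm
    (((ae_restrict_iff' measurableSet_Ici).1 hFc).mono fun r h hr => h (hJ (uIoc_subset_uIcc hr)).1)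
    (hB.mono fun r h hr => h (hJ (uIoc_subset_uIcc hr)))

theorem norm_flow_sub_flow_le {P : ℝ} {K : NNReal} {a b : ℝ} (ha : a ∈ Ici τ₀) (hb : b ∈ Ici τ₀)
    (hP : ∀ r ∈ uIcc a b, ∀ u ∈ uIcc a b, ‖Φ r u‖ ≤ P) (hP₀ : 0 ≤ P)
    (hFl : ∀ᵐ u, u ∈ uIcc a b → LipschitzWith K (F u))
    (hsolc : ∀ η, ContinuousOn (fun t => sol t a η) (uIcc a b))
    (hVOC : ∀ s ∈ Ici τ₀, ∀ t ∈ Ici τ₀, ∀ η : X,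
      sol t s η = Φ t s η + ∫ r in s..t, Φ t r (F r (sol r s η)))
    (hint : ∀ r ∈ uIcc a b, ∀ η, IntervalIntegrable (fun u => Φ r u (F u (sol u a η))) volume a r)
    (η η' : X) {r : ℝ} (hr : r ∈ uIcc a b) :
    ‖sol r a η - sol r a η'‖ ≤
      P * ‖η - η'‖ + P * K * |∫ u in a..r, ‖sol u a η - sol u a η'‖| := by
  have hsub : uIcc a r ⊆ uIcc a b := uIcc_subset_uIcc_left hr
  have hrI : r ∈ Ici τ₀ := ordConnected_Ici.uIcc_subset ha hb hr
  have hdiff : sol r a η - sol r a η' = Φ r a (η - η') +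
      ∫ u in a..r, Φ r u (F u (sol u a η) - F u (sol u a η')) := by
    simp only [map_sub]
    rw [intervalIntegral.integral_sub (hint r hr η) (hint r hr η'), hVOC a ha r hrI,
      hVOC a ha r hrI]
    abel
  have hcont : ContinuousOn (fun u => P * K * ‖sol u a η - sol u a η'‖) (uIcc a r) :=
    (continuousOn_const.mul (((hsolc η).sub (hsolc η')).norm)).mono hsub
  have hI : ‖∫ u in a..r, Φ r u (F u (sol u a η) - F u (sol u a η'))‖ ≤
      |∫ u in a..r, P * K * ‖sol u a η - sol u a η'‖| := by
    refine intervalIntegral.norm_integral_le_abs_of_norm_le ?_ hcont.intervalIntegrable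
    rw [ae_restrict_iff' measurableSet_uIoc]
    filter_upwards [hFl] with u hu hua
    have hu' : u ∈ uIcc a b := hsub (uIoc_subset_uIcc hua)
    calc ‖Φ r u (F u (sol u a η) - F u (sol u a η'))‖
        ≤ P * ‖F u (sol u a η) - F u (sol u a η')‖ := (Φ r u).le_of_opNorm_le (hP r hr u hu') _
      _ ≤ P * (K * ‖sol u a η - sol u a η'‖) := by gcongr; exact (hu hu').norm_sub_le _ _
      _ = P * K * ‖sol u a η - sol u a η'‖ := by ring
  calc ‖sol r a η - sol r a η'‖
      ≤ ‖Φ r a (η - η')‖ + ‖∫ u in a..r, Φ r u (F u (sol u a η) - F u (sol u a η'))‖ := by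
        rw [hdiff]; exact norm_add_le _ _
    _ ≤ P * ‖η - η'‖ + |∫ u in a..r, P * K * ‖sol u a η - sol u a η'‖| :=
        add_le_add ((Φ r a).le_of_opNorm_le (hP r hr a left_mem_uIcc) _) hI
    _ = P * ‖η - η'‖ + P * K * |∫ u in a..r, ‖sol u a η - sol u a η'‖| := by
        rw [intervalIntegral.integral_const_mul, abs_mul, abs_of_nonneg (by positivity)]

theorem exists_lipschitzWith_flow
    (hΦcont : ContinuousOn (fun p : ℝ × ℝ => Φ p.1 p.2) (Ici τ₀ ×ˢ Ici τ₀))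
    (hFl : ∀ T, ∃ K, ∀ᵐ t, t ∈ Icc τ₀ T → LipschitzWith K (F t))
    (hsolc : ∀ s ∈ Ici τ₀, ∀ η, ContinuousOn (fun t => sol t s η) (Ici τ₀))
    (hVOC : ∀ s ∈ Ici τ₀, ∀ t ∈ Ici τ₀, ∀ η : X,
      sol t s η = Φ t s η + ∫ r in s..t, Φ t r (F r (sol r s η)))
    (hint : ∀ a ∈ Ici τ₀, ∀ b ∈ Ici τ₀, ∀ t ∈ Ici τ₀, ∀ η,
      IntervalIntegrable (fun r => Φ t r (F r (sol r a η))) volume a b)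
    {a b : ℝ} (ha : a ∈ Ici τ₀) (hb : b ∈ Ici τ₀) : ∃ Λ, LipschitzWith Λ (sol b a) := by
  have hJ : uIcc a b ⊆ Ici τ₀ := ordConnected_Ici.uIcc_subset ha hb
  obtain ⟨P, hP⟩ := (isCompact_uIcc.prod isCompact_uIcc).exists_bound_of_continuousOn
    (hΦcont.mono (prod_mono hJ hJ))
  have hP₀ : 0 ≤ P := (norm_nonneg _).trans (hP (a, a) ⟨left_mem_uIcc, left_mem_uIcc⟩)
  obtain ⟨K, hK⟩ := hFl (max a b)
  have hKJ : ∀ᵐ u, u ∈ uIcc a b → LipschitzWith K (F u) := hK.mono fun u h hu =>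
    h (uIcc_subset_Icc ⟨ha, le_max_left a b⟩ ⟨hb, le_max_right a b⟩ hu)
  refine ⟨_, LipschitzWith.of_dist_le' (K := P * exp (P * K * |b - a|)) fun η η' => ?_⟩
  rw [dist_eq_norm, dist_eq_norm, mul_right_comm]
  exact le_mul_exp_of_le_add_mul_abs_integral (u := fun r => ‖sol r a η - sol r a η'‖)
    (by positivity) (fun _ => norm_nonneg _)
    (((hsolc a ha η).sub (hsolc a ha η')).norm.mono hJ) fun r hr =>
    norm_flow_sub_flow_le ha hb (fun r hr u hu => hP (r, u) ⟨hr, hu⟩) hP₀ hKJ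
      (fun η => (hsolc a ha η).mono hJ) hVOC (fun r hr η => hint a ha r (hJ hr) r (hJ hr) η)
      η η' hr

theorem seminorm_flow_sub_evolution_le [CompleteSpace X] {Nt : ℝ → X → ℝ} {C K α M s t : ℝ}
    (hNadd : ∀ x y : X, Nt t (x + y) ≤ Nt t x + Nt t y)
    (hNsmul : ∀ (c : ℝ) (x : X), Nt t (c • x) = |c| * Nt t x) (hNle : ∀ x, Nt t x ≤ C * ‖x‖)
    (hK : 0 ≤ K) (hα : 0 < α) (hM : 0 ≤ M)
    (hH1 : ∀ s ∈ Ici τ₀, ∀ t ∈ Ici τ₀, s ≤ t → ∀ x : X,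
      Nt t (Φ t s x) ≤ K * exp (-α * (t - s)) * Nt s x)
    (hFM : ∀ᵐ t ∂volume.restrict (Ici τ₀), ∀ x, Nt t (F t x) ≤ M)
    (hVOC : ∀ s ∈ Ici τ₀, ∀ t ∈ Ici τ₀, ∀ η : X,
      sol t s η = Φ t s η + ∫ r in s..t, Φ t r (F r (sol r s η)))
    (hint : ∀ a ∈ Ici τ₀, ∀ b ∈ Ici τ₀, ∀ t ∈ Ici τ₀, ∀ η,
      IntervalIntegrable (fun r => Φ t r (F r (sol r a η))) volume a b)
    (hs : s ∈ Ici τ₀) (hst : s ≤ t) (η : X) : Nt t (sol t s η - Φ t s η) ≤ K * M / α := by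
  have ht : t ∈ Ici τ₀ := le_trans hs hst
  let p : Seminorm ℝ X := .of (Nt t) hNadd fun c x => by rw [hNsmul, Real.norm_eq_abs]
  have hdiff : sol t s η - Φ t s η = ∫ r in s..t, Φ t r (F r (sol r s η)) := by
    rw [hVOC s hs t ht]; abel
  rw [hdiff]
  refine p.intervalIntegral_le_of_le_mul_exp hNle hα (mul_nonneg hK hM) hst
    (hint s hs t ht t ht η) ?_
  filter_upwards [(ae_restrict_iff' measurableSet_Ici).1 hFM] with r hr hrst
  have hrI : r ∈ Ici τ₀ := le_trans hs hrst.1.le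
  calc Nt t (Φ t r (F r (sol r s η))) ≤ K * exp (-α * (t - r)) * Nt r (F r (sol r s η)) :=
        hH1 r hrI t ht hrst.2 _
    _ ≤ K * exp (-α * (t - r)) * M := by gcongr; exact hr hrI _
    _ = K * M * exp (-α * (t - r)) := by ring

end VariationOfConstants

theorem statement13_general
    {X : Type*} [NormedAddCommGroup X] [NormedSpace ℝ X] [CompleteSpace X]
    (τ₀ : ℝ)
    (Nt : ℝ → X → ℝ)
    (hNadd : ∀ t : ℝ, ∀ x y : X, Nt t (x + y) ≤ Nt t x + Nt t y)
    (hNsmul : ∀ t : ℝ, ∀ c : ℝ, ∀ x : X, Nt t (c • x) = |c| * Nt t x)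
    (ℓ : ℝ → ℝ)
    (hℓpos : ∀ t ∈ Set.Ici τ₀, 0 < ℓ t)
    (hℓloc : ∀ a b : ℝ, ∃ C : ℝ, ∀ t ∈ Set.Icc a b ∩ Set.Ici τ₀, ℓ t ≤ C)
    (hNequiv : ∀ t ∈ Set.Ici τ₀, ∀ x : X, (1 / ℓ t) * ‖x‖ ≤ Nt t x ∧ Nt t x ≤ ℓ t * ‖x‖)
    (Φ : ℝ → ℝ → X →L[ℝ] X)
    (hΦcont : ContinuousOn (fun p : ℝ × ℝ => Φ p.1 p.2) (Set.Ici τ₀ ×ˢ Set.Ici τ₀))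
    (hΦid : ∀ t ∈ Set.Ici τ₀, Φ t t = ContinuousLinearMap.id ℝ X)
    (hΦcomp : ∀ t ∈ Set.Ici τ₀, ∀ r ∈ Set.Ici τ₀, ∀ s ∈ Set.Ici τ₀,
      Φ t s = (Φ t r).comp (Φ r s))
    (K α : ℝ) (hK : 1 ≤ K) (hα : 0 < α)
    (hH1 : ∀ s ∈ Set.Ici τ₀, ∀ t ∈ Set.Ici τ₀, s ≤ t → ∀ x : X,
      Nt t (Φ t s x) ≤ K * Real.exp (-α * (t - s)) * Nt s x)
    (F : ℝ → X → X)
    (hFmeas : ∀ x : X, StronglyMeasurable (fun t => F t x))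
    (hFcont : ∀ᵐ t ∂(volume.restrict (Set.Ici τ₀)), Continuous (F t))
    (L M : ℝ) (hL : 0 ≤ L) (hM : 0 ≤ M)
    (hH2 : ∀ᵐ t ∂(volume.restrict (Set.Ici τ₀)),
      F t 0 = 0 ∧ (∀ x : X, Nt t (F t x) ≤ M) ∧
        (∀ x y : X, Nt t (F t x - F t y) ≤ L * Nt t (x - y)))
    (sol : ℝ → ℝ → X → X)
    (hsolCont : ContinuousOn (fun p : ℝ × ℝ × X => sol p.1 p.2.1 p.2.2)
      (Set.Ici τ₀ ×ˢ Set.Ici τ₀ ×ˢ (Set.univ : Set X)))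
    (hsolId : ∀ τ ∈ Set.Ici τ₀, ∀ x : X, sol τ τ x = x)
    (hsolGrp : ∀ t₀ ∈ Set.Ici τ₀, ∀ t₁ ∈ Set.Ici τ₀, ∀ t₂ ∈ Set.Ici τ₀, ∀ x : X,
      sol t₂ t₀ x = sol t₂ t₁ (sol t₁ t₀ x))
    (hVOC : ∀ s ∈ Set.Ici τ₀, ∀ t ∈ Set.Ici τ₀, ∀ η : X,
      sol t s η = Φ t s η + ∫ r in s..t, Φ t r (F r (sol r s η)))
    (huniq : ∀ τ ∈ Set.Ici τ₀, ∀ x : ℝ → X, ContinuousOn x (Set.Ici τ₀) →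
      (∀ t ∈ Set.Ici τ₀, x t = Φ t τ (x τ) + ∫ r in τ..t, Φ t r (F r (x r))) →
      ∀ t ∈ Set.Ici τ₀, x t = sol t τ (x τ)) :
    ∃ H G : ℝ → X → X,
      (∀ t ∈ Set.Ici τ₀, Continuous (H t) ∧ Continuous (G t) ∧
        (∀ ξ : X, G t (H t ξ) = ξ) ∧ (∀ η : X, H t (G t η) = η) ∧ H t 0 = 0) ∧
      (∀ s ∈ Set.Ici τ₀, ∀ t ∈ Set.Ici τ₀, ∀ ξ : X, H t (Φ t s ξ) = sol t s (H s ξ)) ∧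
      (∀ t ∈ Set.Ici τ₀, ∀ ξ : X, Nt t (H t ξ - ξ) ≤ K * M / α) ∧
      (∀ t ∈ Set.Ici τ₀, ∀ η : X, Nt t (G t η - η) ≤ K * M / α) ∧
      (∀ t ∈ Set.Ici τ₀, ∃ LH : ℝ, 0 ≤ LH ∧
        ∀ ξ ξ' : X, Nt t (H t ξ - H t ξ') ≤ LH * ‖ξ - ξ'‖) ∧
      (∀ t ∈ Set.Ici τ₀, ∃ LG : ℝ, 0 ≤ LG ∧
        ∀ η η' : X, Nt t (G t η - G t η') ≤ LG * ‖η - η'‖) ∧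
      ContinuousOn (fun p : ℝ × X => H p.1 p.2) (Set.Ici τ₀ ×ˢ (Set.univ : Set X)) ∧
      ContinuousOn (fun p : ℝ × X => G p.1 p.2) (Set.Ici τ₀ ×ˢ (Set.univ : Set X)) := by
  have hτ : τ₀ ∈ Ici τ₀ := self_mem_Ici
  have hequiv := exists_uniform_norm_equiv hℓpos hℓloc hNequiv
  have hFM : ∀ᵐ t ∂volume.restrict (Ici τ₀), ∀ x, Nt t (F t x) ≤ M := hH2.mono fun _ h => h.2.1
  have hFl := exists_ae_lipschitzWith hL hequiv (hH2.mono fun _ h => h.2.2)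
  have hsolc : ∀ s ∈ Ici τ₀, ∀ η, ContinuousOn (fun t => sol t s η) (Ici τ₀) := fun s hs η =>
    hsolCont.comp (f := fun t => (t, s, η)) (by fun_prop) fun t ht => ⟨ht, hs, mem_univ η⟩
  have hint : ∀ a ∈ Ici τ₀, ∀ b ∈ Ici τ₀, ∀ t ∈ Ici τ₀, ∀ η,
      IntervalIntegrable (fun r => Φ t r (F r (sol r a η))) volume a b := fun a ha b hb t ht η =>
    intervalIntegrable_evolution_apply_comp hΦcont hFmeas hFcont (exists_ae_norm_le hequiv hFM)
      ha hb ht ((hsolc a ha η).mono (ordConnected_Ici.uIcc_subset ha hb))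
  have hnear (t : ℝ) (ht : t ∈ Ici τ₀) (ζ : X) : Nt t (sol t τ₀ ζ - Φ t τ₀ ζ) ≤ K * M / α :=
    seminorm_flow_sub_evolution_le (hNadd t) (hNsmul t) (fun x => (hNequiv t ht x).2)
      (zero_le_one.trans hK) hα hM hH1 hFM hVOC hint hτ ht ζ
  have hΦ : IsEvolutionOn (fun t s => Φ t s) (Ici τ₀) := .of_clm hΦid hΦcomp
  have hsol : IsEvolutionOn sol (Ici τ₀) := ⟨hsolId, hsolGrp⟩
  have hΦc := continuousOn_clm_apply_uncurry hΦcont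
  have hΦlip (s : ℝ) (_ : s ∈ Ici τ₀) (t : ℝ) (_ : t ∈ Ici τ₀) : ∃ K, LipschitzWith K (Φ t s) :=
    ⟨_, (Φ t s).lipschitz⟩
  have hsollip (s : ℝ) (hs : s ∈ Ici τ₀) (t : ℝ) (ht : t ∈ Ici τ₀) :
      ∃ K, LipschitzWith K (sol t s) :=
    exists_lipschitzWith_flow hΦcont hFl hsolc hVOC hint hs ht
  have hHlip (t : ℝ) (ht : t ∈ Ici τ₀) := exists_lipschitzWith_evolutionConj hΦlip hsollip hτ ht
  have hGlip (t : ℝ) (ht : t ∈ Ici τ₀) := exists_lipschitzWith_evolutionConj hsollip hΦlip hτ ht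
  refine ⟨evolutionConj (fun t s => Φ t s) sol τ₀, evolutionConj sol (fun t s => Φ t s) τ₀,
    fun t ht => ⟨(hHlip t ht).elim fun _ h => h.continuous,
      (hGlip t ht).elim fun _ h => h.continuous,
      hΦ.evolutionConj_evolutionConj hsol hτ ht, hsol.evolutionConj_evolutionConj hΦ hτ ht, ?_⟩,
    fun s hs t ht => hΦ.evolutionConj_apply hsol hτ hs ht,
    fun t ht => hΦ.evolutionConj_sub_le hτ ht (hnear t ht),
    fun t ht => hsol.evolutionConj_symm_sub_le (fun x => by simpa using hNsmul t (-1) x) hτ ht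
      (hnear t ht),
    fun t ht => (hHlip t ht).elim fun _ h =>
      h.exists_le_mul_norm_sub (hℓpos t ht).le fun x => (hNequiv t ht x).2,
    fun t ht => (hGlip t ht).elim fun _ h =>
      h.exists_le_mul_norm_sub (hℓpos t ht).le fun x => (hNequiv t ht x).2,
    continuousOn_evolutionConj hΦc hsolCont hτ, continuousOn_evolutionConj hsolCont hΦc hτ⟩
  simp only [evolutionConj, map_zero]
  exact flow_apply_zero (hH2.mono fun _ h => h.1) huniq hτ ht

theorem statement13
    {X : Type*} [NormedAddCommGroup X] [NormedSpace ℝ X] [CompleteSpace X]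
    (τ₀ : ℝ)
    (Nt : ℝ → X → ℝ)
    (hNadd : ∀ t : ℝ, ∀ x y : X, Nt t (x + y) ≤ Nt t x + Nt t y)
    (hNsmul : ∀ t : ℝ, ∀ c : ℝ, ∀ x : X, Nt t (c • x) = |c| * Nt t x)
    (ℓ : ℝ → ℝ)
    (hℓpos : ∀ t ∈ Set.Ici τ₀, 0 < ℓ t)
    (hℓloc : ∀ a b : ℝ, ∃ C : ℝ, ∀ t ∈ Set.Icc a b ∩ Set.Ici τ₀, ℓ t ≤ C)
    (hNequiv : ∀ t ∈ Set.Ici τ₀, ∀ x : X, (1 / ℓ t) * ‖x‖ ≤ Nt t x ∧ Nt t x ≤ ℓ t * ‖x‖)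
    (Φ : ℝ → ℝ → X →L[ℝ] X)
    (hΦcont : ContinuousOn (fun p : ℝ × ℝ => Φ p.1 p.2) (Set.Ici τ₀ ×ˢ Set.Ici τ₀))
    (hΦid : ∀ t ∈ Set.Ici τ₀, Φ t t = ContinuousLinearMap.id ℝ X)
    (hΦcomp : ∀ t ∈ Set.Ici τ₀, ∀ r ∈ Set.Ici τ₀, ∀ s ∈ Set.Ici τ₀,
      Φ t s = (Φ t r).comp (Φ r s))
    (K α : ℝ) (hK : 1 ≤ K) (hα : 0 < α)
    (hH1 : ∀ s ∈ Set.Ici τ₀, ∀ t ∈ Set.Ici τ₀, s ≤ t → ∀ x : X,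
      Nt t (Φ t s x) ≤ K * Real.exp (-α * (t - s)) * Nt s x)
    (F : ℝ → X → X)
    (hFmeas : ∀ x : X, StronglyMeasurable (fun t => F t x))
    (hFcont : ∀ᵐ t ∂(volume.restrict (Set.Ici τ₀)), Continuous (F t))
    (L M : ℝ) (hL : 0 ≤ L) (hM : 0 ≤ M)
    (hH2 : ∀ᵐ t ∂(volume.restrict (Set.Ici τ₀)),
      F t 0 = 0 ∧ (∀ x : X, Nt t (F t x) ≤ M) ∧
        (∀ x y : X, Nt t (F t x - F t y) ≤ L * Nt t (x - y)))
    (sol : ℝ → ℝ → X → X)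
    (hsolCont : ContinuousOn (fun p : ℝ × ℝ × X => sol p.1 p.2.1 p.2.2)
      (Set.Ici τ₀ ×ˢ Set.Ici τ₀ ×ˢ (Set.univ : Set X)))
    (hsolId : ∀ τ ∈ Set.Ici τ₀, ∀ x : X, sol τ τ x = x)
    (hsolGrp : ∀ t₀ ∈ Set.Ici τ₀, ∀ t₁ ∈ Set.Ici τ₀, ∀ t₂ ∈ Set.Ici τ₀, ∀ x : X,
      sol t₂ t₀ x = sol t₂ t₁ (sol t₁ t₀ x))
    (hVOC : ∀ s ∈ Set.Ici τ₀, ∀ t ∈ Set.Ici τ₀, ∀ η : X,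
      sol t s η = Φ t s η + ∫ r in s..t, Φ t r (F r (sol r s η)))
    (huniq : ∀ τ ∈ Set.Ici τ₀, ∀ x : ℝ → X, ContinuousOn x (Set.Ici τ₀) →
      (∀ t ∈ Set.Ici τ₀, x t = Φ t τ (x τ) + ∫ r in τ..t, Φ t r (F r (x r))) →
      ∀ t ∈ Set.Ici τ₀, x t = sol t τ (x τ))
    (hKL : K * L < α) :
    ∃ H G : ℝ → X → X,
      (∀ t ∈ Set.Ici τ₀, Continuous (H t) ∧ Continuous (G t) ∧
        (∀ ξ : X, G t (H t ξ) = ξ) ∧ (∀ η : X, H t (G t η) = η) ∧ H t 0 = 0) ∧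
      (∀ s ∈ Set.Ici τ₀, ∀ t ∈ Set.Ici τ₀, ∀ ξ : X, H t (Φ t s ξ) = sol t s (H s ξ)) ∧
      (∀ t ∈ Set.Ici τ₀, ∀ ξ : X, Nt t (H t ξ - ξ) ≤ K * M / α) ∧
      (∀ t ∈ Set.Ici τ₀, ∀ η : X, Nt t (G t η - η) ≤ K * M / α) ∧
      (∀ t ∈ Set.Ici τ₀, ∃ LH : ℝ, 0 ≤ LH ∧
        ∀ ξ ξ' : X, Nt t (H t ξ - H t ξ') ≤ LH * ‖ξ - ξ'‖) ∧
      (∀ t ∈ Set.Ici τ₀, ∃ LG : ℝ, 0 ≤ LG ∧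
        ∀ η η' : X, Nt t (G t η - G t η') ≤ LG * ‖η - η'‖) ∧
      ContinuousOn (fun p : ℝ × X => H p.1 p.2) (Set.Ici τ₀ ×ˢ (Set.univ : Set X)) ∧
      ContinuousOn (fun p : ℝ × X => G p.1 p.2) (Set.Ici τ₀ ×ˢ (Set.univ : Set X)) :=
  statement13_general τ₀ Nt hNadd hNsmul ℓ hℓpos hℓloc hNequiv Φ hΦcont hΦid hΦcomp K α hK hα hH1 F
    hFmeas hFcont L M hL hM hH2 sol hsolCont hsolId hsolGrp hVOC huniq
end

section
/- Assume (H1) and (H2^m) with m ≥ 1. Then the derivative of the general solution with respect to the initial value satisfies ‖D₃φ(t,s,η)‖_{s,t} ≤ K·e^{(K·M₁ − α)(t−s)} for all s ≤ t in I and all η ∈ X. -/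
/-!
For fixed `s, η, v`, the vector `Y ρ = D₃φ(ρ,s,η) v` is a mild solution
`Y ρ = Φ(ρ,s) v + ∫ₛ^ρ Φ(ρ,r) (D₂F(r, φ(r,s,η)) (Y r)) dr`. By (H1) and the bound `M₁`, the
weighted quantity `u ρ = e^{α(ρ-s)} ‖Y ρ‖_ρ` satisfies `u ρ ≤ K ‖v‖_s + K M₁ ∫ₛ^ρ u`, and Grönwall
gives `u ρ ≤ K ‖v‖_s e^{K M₁ (ρ-s)}`. As `ρ ↦ ‖·‖_ρ` carries no measurability, `u` cannot be
integrated: the inequality is only used against continuous majorants of `u`, and Grönwall is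
proved by Picard iteration of such majorants, starting from a crude bound of `u` on `[s,t]`.
Integrals are pushed through each `‖·‖_ρ` by Hahn–Banach.
-/

open Set MeasureTheory Real

namespace Seminorm

variable {E : Type*} [NormedAddCommGroup E] [NormedSpace ℝ E]

theorem continuous_of_le_mul_norm (p : Seminorm ℝ E) {C : ℝ} (hp : ∀ x, p x ≤ C * ‖x‖) :
    Continuous p :=
  (LipschitzWith.of_dist_le' fun x y => by
    rw [Real.dist_eq, dist_eq_norm]
    exact (abs_sub_map_le_sub p x y).trans (hp _)).continuous

theorem exists_strongDual_apply_eq (p : Seminorm ℝ E) (hp : Continuous p) (x₀ : E) :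
    ∃ g : StrongDual ℝ E, g x₀ = p x₀ ∧ ∀ x, g x ≤ p x := by
  have hker : ∀ c : ℝ, c • x₀ = 0 → RingHom.id ℝ c • p x₀ = 0 := fun c hc => by
    have := congrArg p hc
    rw [map_smul_eq_mul, map_zero, Real.norm_eq_abs, mul_eq_zero, abs_eq_zero] at this
    rcases this with h | h <;> simp [h]
  set f := LinearPMap.mkSpanSingleton' (σ := RingHom.id ℝ) x₀ (p x₀) hker
  obtain ⟨g, hgf, hgp⟩ := Module.Dual.exists_continuous_extension_of_le_seminorm_real
    f.domain f.toFun hp fun ⟨x, hx⟩ => by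
      obtain ⟨c, rfl⟩ := Submodule.mem_span_singleton.1 hx
      change f ⟨c • x₀, hx⟩ ≤ p (c • x₀)
      rw [LinearPMap.mkSpanSingleton'_apply, map_smul_eq_mul, Real.norm_eq_abs, smul_eq_mul]
      exact mul_le_mul_of_nonneg_right (le_abs_self c) (apply_nonneg p x₀)
  refine ⟨g, ?_, fun x => (le_abs_self _).trans (hgp x)⟩
  rw [hgf ⟨x₀, Submodule.mem_span_singleton_self x₀⟩]
  exact LinearPMap.mkSpanSingleton'_apply_self _ _ _ _

theorem map_integral_le_s14 [CompleteSpace E] {α : Type*} [MeasurableSpace α] {μ : Measure α}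
    (p : Seminorm ℝ E) (hp : Continuous p) {f : α → E} (hf : Integrable f μ) :
    p (∫ a, f a ∂μ) ≤ ∫ a, p (f a) ∂μ := by
  obtain ⟨C, -, hC⟩ := p.bound_of_continuous_normedSpace hp
  have hpf : Integrable (fun a => p (f a)) μ :=
    (hf.norm.const_mul C).mono' (hp.comp_aestronglyMeasurable hf.1)
      (.of_forall fun a => by rw [Real.norm_of_nonneg (apply_nonneg _ _)]; exact hC _)
  obtain ⟨g, hgx, hgp⟩ := p.exists_strongDual_apply_eq hp (∫ a, f a ∂μ)
  calc p (∫ a, f a ∂μ) = ∫ a, g (f a) ∂μ := by rw [← hgx, g.integral_comp_comm hf]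
    _ ≤ ∫ a, p (f a) ∂μ := integral_mono (g.integrable_comp hf) hpf fun a => hgp _

end Seminorm

theorem hasDerivAt_pow_div_factorial (k a r : ℝ) (n : ℕ) :
    HasDerivAt (fun r => (k * (r - a)) ^ (n + 1) / (n + 1).factorial)
      (k * ((k * (r - a)) ^ n / n.factorial)) r := by
  have h : HasDerivAt (fun r => (k * (r - a)) ^ (n + 1)) ((n + 1) * (k * (r - a)) ^ n * k) r := by
    simpa using (((hasDerivAt_id r).sub_const a).const_mul k).fun_pow (n + 1)
  refine (h.div_const _).congr_deriv ?_
  rw [Nat.factorial_succ]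
  push_cast
  field_simp

theorem le_mul_exp_of_le_add_integral_majorant {u : ℝ → ℝ} {a b c k A : ℝ} (hc : 0 ≤ c)
    (hA : ∀ ρ ∈ Icc a b, u ρ ≤ A)
    (hu : ∀ g : ℝ → ℝ, Continuous g → (∀ r ∈ Icc a b, u r ≤ g r) →
      ∀ ρ ∈ Icc a b, u ρ ≤ c + k * ∫ r in a..ρ, g r) :
    ∀ ρ ∈ Icc a b, u ρ ≤ c * exp (k * (ρ - a)) := by
  -- `w n` is the solution of the integral equation plus the `n`-th Picard error term.
  set w : ℕ → ℝ → ℝ := fun n r =>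
    c * exp (k * (r - a)) + A * ((k * (r - a)) ^ n / n.factorial)
  have hw_cont (n : ℕ) : Continuous (w n) := by fun_prop
  have hw_succ (n : ℕ) (ρ : ℝ) : c + k * ∫ r in a..ρ, w n r = w (n + 1) ρ := by
    have hderiv (r : ℝ) : HasDerivAt (w (n + 1)) (k * w n r) r := by
      refine (((((hasDerivAt_id r).sub_const a).const_mul k).exp.const_mul c).fun_add
        ((hasDerivAt_pow_div_factorial k a r n).const_mul A)).congr_deriv ?_
      simp only [w, id]
      ring
    rw [← intervalIntegral.integral_const_mul,
      intervalIntegral.integral_eq_sub_of_hasDerivAt (fun r _ => hderiv r)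
        ((continuous_const.mul (hw_cont n)).intervalIntegrable a ρ)]
    simp [w]
  have hle (n : ℕ) : ∀ ρ ∈ Icc a b, u ρ ≤ w n ρ := by
    induction n with
    | zero =>
      exact fun ρ hρ => by
        simpa [w] using (hA ρ hρ).trans (le_add_of_nonneg_left (by positivity))
    | succ n ih => exact fun ρ hρ => (hu (w n) (hw_cont n) ih ρ hρ).trans_eq (hw_succ n ρ)
  intro ρ hρ
  have hlim : Filter.Tendsto (fun n => w n ρ) Filter.atTop
      (nhds (c * exp (k * (ρ - a)) + A * 0)) :=
    ((FloorSemiring.tendsto_pow_div_factorial_atTop (k * (ρ - a))).const_mul A).const_add _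
  rw [mul_zero, add_zero] at hlim
  exact ge_of_tendsto hlim (.of_forall fun n => hle n ρ hρ)

theorem integrableOn_Ioc_of_eq_comp {E F : Type*} [NormedAddCommGroup E] [NormedSpace ℝ E]
    [NormedAddCommGroup F] [NormedSpace ℝ F] {s t ρ : ℝ} {f : ℝ → E} {g : ℝ → F}
    (L : E →L[ℝ] F) (hf : IntegrableOn f (Ioc s t)) (hρ : ρ ≤ t)
    (hg : ∀ r ∈ Ioc s ρ, g r = L (f r)) : IntegrableOn g (Ioc s ρ) :=
  IntegrableOn.congr_fun (L.integrable_comp (hf.mono_set (Ioc_subset_Ioc_right hρ)))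
    (fun r hr => (hg r hr).symm) measurableSet_Ioc

section MildSolution

variable {X : Type*} [NormedAddCommGroup X] [NormedSpace ℝ X]
  {Φ : ℝ → ℝ → X →L[ℝ] X} {s t : ℝ} {G Y : ℝ → X} {y₀ : X}

theorem eq_add_integral_apply {D B : ℝ → X →L[ℝ] X}
    (hcomp : ∀ ρ ∈ Icc s t, ∀ r ∈ Icc s t, Φ ρ r = (Φ ρ t).comp (Φ t r))
    (hB : IntegrableOn (fun r => (Φ t r).comp (B r)) (Ioc s t))
    (hD : ∀ ρ ∈ Icc s t, D ρ = Φ ρ s + ∫ r in s..ρ, (Φ ρ r).comp (B r)) (v : X) :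
    ∀ ρ ∈ Icc s t, D ρ v = Φ ρ s v + ∫ r in s..ρ, Φ ρ r (B r v) := by
  intro ρ hρ
  have hint : IntervalIntegrable (fun r => (Φ ρ r).comp (B r)) volume s ρ := by
    refine (intervalIntegrable_iff_integrableOn_Ioc_of_le hρ.1).2
      (integrableOn_Ioc_of_eq_comp (ContinuousLinearMap.compL ℝ X X X (Φ ρ t)) hB hρ.2 ?_)
    intro r hr
    rw [hcomp ρ hρ r ⟨hr.1.le, hr.2.trans hρ.2⟩]
    rfl
  rw [hD ρ hρ, add_apply, ContinuousLinearMap.intervalIntegral_apply hint]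
  rfl

theorem integrableOn_evolution_apply
    (hcomp : ∀ ρ ∈ Icc s t, ∀ r ∈ Icc s t, Φ ρ r = (Φ ρ t).comp (Φ t r))
    (hG : IntegrableOn (fun r => Φ t r (G r)) (Ioc s t)) {ρ : ℝ} (hρ : ρ ∈ Icc s t) :
    IntegrableOn (fun r => Φ ρ r (G r)) (Ioc s ρ) :=
  integrableOn_Ioc_of_eq_comp (Φ ρ t) hG hρ.2 fun r hr => by
    rw [hcomp ρ hρ r ⟨hr.1.le, hr.2.trans hρ.2⟩]
    rfl

theorem exists_norm_le_of_mild
    (hΦs : ContinuousOn (fun ρ => Φ ρ s) (Icc s t)) (hΦt : ContinuousOn (fun ρ => Φ ρ t) (Icc s t))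
    (hcomp : ∀ ρ ∈ Icc s t, ∀ r ∈ Icc s t, Φ ρ r = (Φ ρ t).comp (Φ t r))
    (hG : IntegrableOn (fun r => Φ t r (G r)) (Ioc s t))
    (hY : ∀ ρ ∈ Icc s t, Y ρ = Φ ρ s y₀ + ∫ r in s..ρ, Φ ρ r (G r)) :
    ∃ A, ∀ ρ ∈ Icc s t, ‖Y ρ‖ ≤ A := by
  obtain ⟨C₁, hC₁⟩ := isCompact_Icc.exists_bound_of_continuousOn hΦs
  obtain ⟨C₂, hC₂⟩ := isCompact_Icc.exists_bound_of_continuousOn hΦt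
  refine ⟨C₁ * ‖y₀‖ + C₂ * ∫ r in Ioc s t, ‖Φ t r (G r)‖, fun ρ hρ => ?_⟩
  have hC₂0 : 0 ≤ C₂ := (norm_nonneg _).trans (hC₂ ρ hρ)
  have hinitial : ‖Φ ρ s y₀‖ ≤ C₁ * ‖y₀‖ :=
    ((Φ ρ s).le_opNorm y₀).trans (mul_le_mul_of_nonneg_right (hC₁ ρ hρ) (norm_nonneg _))
  have hpoint : ∀ r ∈ Ioc s ρ, ‖Φ ρ r (G r)‖ ≤ C₂ * ‖Φ t r (G r)‖ := fun r hr => by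
    rw [hcomp ρ hρ r ⟨hr.1.le, hr.2.trans hρ.2⟩]
    exact ((Φ ρ t).le_opNorm _).trans (mul_le_mul_of_nonneg_right (hC₂ ρ hρ) (norm_nonneg _))
  have hGρ := hG.mono_set (Ioc_subset_Ioc_right hρ.2)
  have hforcing : ‖∫ r in s..ρ, Φ ρ r (G r)‖ ≤ C₂ * ∫ r in Ioc s t, ‖Φ t r (G r)‖ :=
    calc ‖∫ r in s..ρ, Φ ρ r (G r)‖ ≤ ∫ r in Ioc s ρ, ‖Φ ρ r (G r)‖ := by
          rw [intervalIntegral.integral_of_le hρ.1]; exact norm_integral_le_integral_norm _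
      _ ≤ ∫ r in Ioc s ρ, C₂ * ‖Φ t r (G r)‖ :=
          setIntegral_mono_on (integrableOn_evolution_apply hcomp hG hρ).norm
            (hGρ.norm.const_mul C₂) measurableSet_Ioc hpoint
      _ ≤ C₂ * ∫ r in Ioc s t, ‖Φ t r (G r)‖ := by
          rw [integral_const_mul]
          exact mul_le_mul_of_nonneg_left (setIntegral_mono_set hG.norm
            (.of_forall fun r => norm_nonneg _) (Ioc_subset_Ioc_right hρ.2).eventuallyLE) hC₂0
  rw [hY ρ hρ]
  exact (norm_add_le _ _).trans (add_le_add hinitial hforcing)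

theorem exp_mul_seminorm_le_of_mild [CompleteSpace X] {K M α : ℝ} (N : ℝ → Seminorm ℝ X)
    (hN : ∀ ρ ∈ Icc s t, Continuous (N ρ)) (hK : 0 ≤ K) (hM : 0 ≤ M)
    (hΦ : ∀ r ∈ Icc s t, ∀ ρ ∈ Icc s t, r ≤ ρ → ∀ x,
      N ρ (Φ ρ r x) ≤ K * exp (-α * (ρ - r)) * N r x)
    (hcomp : ∀ ρ ∈ Icc s t, ∀ r ∈ Icc s t, Φ ρ r = (Φ ρ t).comp (Φ t r))
    (hG : IntegrableOn (fun r => Φ t r (G r)) (Ioc s t))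
    (hY : ∀ ρ ∈ Icc s t, Y ρ = Φ ρ s y₀ + ∫ r in s..ρ, Φ ρ r (G r))
    (hGY : ∀ᵐ r ∂volume.restrict (Ioc s t), N r (G r) ≤ M * N r (Y r))
    {g : ℝ → ℝ} (hg : Continuous g) (hYg : ∀ r ∈ Icc s t, exp (α * (r - s)) * N r (Y r) ≤ g r)
    {ρ : ℝ} (hρ : ρ ∈ Icc s t) :
    exp (α * (ρ - s)) * N ρ (Y ρ) ≤ K * N s y₀ + K * M * ∫ r in s..ρ, g r := by
  have hs : s ∈ Icc s t := ⟨le_rfl, hρ.1.trans hρ.2⟩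
  have hpoint : ∀ᵐ r ∂volume.restrict (Ioc s ρ),
      N ρ (Φ ρ r (G r)) ≤ K * M * exp (-α * (ρ - s)) * g r := by
    filter_upwards [ae_restrict_of_ae_restrict_of_subset (Ioc_subset_Ioc_right hρ.2) hGY,
      ae_restrict_mem measurableSet_Ioc] with r hGYr hr
    have hr' : r ∈ Icc s t := ⟨hr.1.le, hr.2.trans hρ.2⟩
    have hYr : N r (Y r) ≤ exp (-α * (r - s)) * g r := by
      rw [neg_mul, exp_neg, ← div_eq_inv_mul, le_div_iff₀ (exp_pos _), mul_comm]
      exact hYg r hr'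
    calc N ρ (Φ ρ r (G r)) ≤ K * exp (-α * (ρ - r)) * N r (G r) := hΦ r hr' ρ hρ hr.2 _
      _ ≤ K * exp (-α * (ρ - r)) * (M * (exp (-α * (r - s)) * g r)) := by
          gcongr
          exact hGYr.trans (by gcongr)
      _ = K * M * exp (-α * (ρ - s)) * g r := by
          rw [show -α * (ρ - s) = -α * (ρ - r) + -α * (r - s) by ring, exp_add]; ring
  have hforcing : N ρ (∫ r in s..ρ, Φ ρ r (G r)) ≤ K * M * exp (-α * (ρ - s)) * ∫ r in s..ρ, g r :=
    calc N ρ (∫ r in s..ρ, Φ ρ r (G r)) ≤ ∫ r in Ioc s ρ, N ρ (Φ ρ r (G r)) := by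
          rw [intervalIntegral.integral_of_le hρ.1]
          exact (N ρ).map_integral_le_s14 (hN ρ hρ) (integrableOn_evolution_apply hcomp hG hρ)
      _ ≤ ∫ r in Ioc s ρ, K * M * exp (-α * (ρ - s)) * g r :=
          integral_mono_of_nonneg (.of_forall fun r => apply_nonneg _ _)
            ((continuous_const.mul hg).integrableOn_Ioc) hpoint
      _ = K * M * exp (-α * (ρ - s)) * ∫ r in s..ρ, g r := by
          rw [integral_const_mul, intervalIntegral.integral_of_le hρ.1]
  have hexp : exp (α * (ρ - s)) * exp (-α * (ρ - s)) = 1 := by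
    rw [← exp_add, ← exp_zero]; ring_nf
  calc exp (α * (ρ - s)) * N ρ (Y ρ)
      ≤ exp (α * (ρ - s)) * (K * exp (-α * (ρ - s)) * N s y₀
          + K * M * exp (-α * (ρ - s)) * ∫ r in s..ρ, g r) := by
        rw [hY ρ hρ]
        gcongr
        exact (map_add_le_add _ _ _).trans (add_le_add (hΦ s hs ρ hρ hρ.1 y₀) hforcing)
    _ = K * N s y₀ + K * M * ∫ r in s..ρ, g r := by
        linear_combination (K * N s y₀ + K * M * ∫ r in s..ρ, g r) * hexp

theorem seminorm_le_of_mild [CompleteSpace X] {K M α L : ℝ} (N : ℝ → Seminorm ℝ X)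
    (hL : 0 ≤ L) (hNle : ∀ ρ ∈ Icc s t, ∀ x, N ρ x ≤ L * ‖x‖) (hK : 0 ≤ K) (hM : 0 ≤ M)
    (hΦs : ContinuousOn (fun ρ => Φ ρ s) (Icc s t)) (hΦt : ContinuousOn (fun ρ => Φ ρ t) (Icc s t))
    (hΦ : ∀ r ∈ Icc s t, ∀ ρ ∈ Icc s t, r ≤ ρ → ∀ x,
      N ρ (Φ ρ r x) ≤ K * exp (-α * (ρ - r)) * N r x)
    (hcomp : ∀ ρ ∈ Icc s t, ∀ r ∈ Icc s t, Φ ρ r = (Φ ρ t).comp (Φ t r))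
    (hG : IntegrableOn (fun r => Φ t r (G r)) (Ioc s t))
    (hY : ∀ ρ ∈ Icc s t, Y ρ = Φ ρ s y₀ + ∫ r in s..ρ, Φ ρ r (G r))
    (hGY : ∀ᵐ r ∂volume.restrict (Ioc s t), N r (G r) ≤ M * N r (Y r)) (hst : s ≤ t) :
    N t (Y t) ≤ K * exp ((K * M - α) * (t - s)) * N s y₀ := by
  obtain ⟨A, hA⟩ := exists_norm_le_of_mild hΦs hΦt hcomp hG hY
  have hbound : ∀ ρ ∈ Icc s t, exp (α * (ρ - s)) * N ρ (Y ρ) ≤ exp (|α| * (t - s)) * (L * A) :=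
    fun ρ hρ => by
      have hα : α * (ρ - s) ≤ |α| * (t - s) := by
        nlinarith [le_abs_self α, abs_nonneg α, hρ.1, hρ.2]
      gcongr
      exact (hNle ρ hρ _).trans (by gcongr; exact hA ρ hρ)
  have hgronwall := le_mul_exp_of_le_add_integral_majorant (k := K * M)
    (by positivity : 0 ≤ K * N s y₀) hbound
    (fun g hg hYg ρ hρ => exp_mul_seminorm_le_of_mild N
      (fun ρ hρ => (N ρ).continuous_of_le_mul_norm (hNle ρ hρ)) hK hM hΦ hcomp hG hY hGY hg hYg hρ)
    t ⟨hst, le_rfl⟩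
  calc N t (Y t) = exp (-α * (t - s)) * (exp (α * (t - s)) * N t (Y t)) := by
        rw [← mul_assoc, ← exp_add]; ring_nf; rw [exp_zero, one_mul]
    _ ≤ exp (-α * (t - s)) * (K * N s y₀ * exp (K * M * (t - s))) := by gcongr
    _ = K * exp ((K * M - α) * (t - s)) * N s y₀ := by
        rw [show (K * M - α) * (t - s) = K * M * (t - s) + -α * (t - s) by ring, exp_add]; ring

end MildSolution

theorem statement14_general
    {X : Type*} [NormedAddCommGroup X] [NormedSpace ℝ X] [CompleteSpace X]
    (τ₀ : ℝ)
    (Nt : ℝ → X → ℝ)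
    (hNadd : ∀ t : ℝ, ∀ x y : X, Nt t (x + y) ≤ Nt t x + Nt t y)
    (hNsmul : ∀ t : ℝ, ∀ c : ℝ, ∀ x : X, Nt t (c • x) = |c| * Nt t x)
    (ℓ : ℝ → ℝ)
    (hℓpos : ∀ t ∈ Set.Ici τ₀, 0 < ℓ t)
    (hℓloc : ∀ a b : ℝ, ∃ C : ℝ, ∀ t ∈ Set.Icc a b ∩ Set.Ici τ₀, ℓ t ≤ C)
    (hNequiv : ∀ t ∈ Set.Ici τ₀, ∀ x : X, (1 / ℓ t) * ‖x‖ ≤ Nt t x ∧ Nt t x ≤ ℓ t * ‖x‖)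
    (Φ : ℝ → ℝ → X →L[ℝ] X)
    (hΦcont : ContinuousOn (fun p : ℝ × ℝ => Φ p.1 p.2) (Set.Ici τ₀ ×ˢ Set.Ici τ₀))
    (hΦcomp : ∀ t ∈ Set.Ici τ₀, ∀ r ∈ Set.Ici τ₀, ∀ s ∈ Set.Ici τ₀,
      Φ t s = (Φ t r).comp (Φ r s))
    (K α : ℝ) (hK : 1 ≤ K)
    (hH1 : ∀ s ∈ Set.Ici τ₀, ∀ t ∈ Set.Ici τ₀, s ≤ t → ∀ x : X,
      Nt t (Φ t s x) ≤ K * Real.exp (-α * (t - s)) * Nt s x)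
    (DF : ℝ → X → X →L[ℝ] X)
    (M₁ : ℝ) (hM₁ : 0 ≤ M₁)
    (hDFbound : ∀ᵐ t ∂(volume.restrict (Set.Ici τ₀)), ∀ x v : X,
      Nt t (DF t x v) ≤ M₁ * Nt t v)
    (sol : ℝ → ℝ → X → X)
    (Dsol : ℝ → ℝ → X → X →L[ℝ] X)
    (hVar : ∀ s ∈ Set.Ici τ₀, ∀ t ∈ Set.Ici τ₀, ∀ η : X,
      Dsol t s η
        = Φ t s + ∫ r in s..t, (Φ t r).comp ((DF r (sol r s η)).comp (Dsol r s η)))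
    :
    ∀ s ∈ Set.Ici τ₀, ∀ t ∈ Set.Ici τ₀, s ≤ t → ∀ η v : X,
      Nt t (Dsol t s η v) ≤ K * Real.exp ((K * M₁ - α) * (t - s)) * Nt s v := by
  intro s hs t ht hst η v
  let N : ℝ → Seminorm ℝ X := fun τ =>
    Seminorm.of (Nt τ) (hNadd τ) fun c x => by rw [hNsmul, Real.norm_eq_abs]
  have hsub : Icc s t ⊆ Ici τ₀ := fun r hr => (mem_Ici.1 hs).trans hr.1
  set B : ℝ → X →L[ℝ] X := fun r => (DF r (sol r s η)).comp (Dsol r s η)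
  by_cases hB : IntegrableOn (fun r => (Φ t r).comp (B r)) (Ioc s t)
  · obtain ⟨L, hL⟩ := hℓloc s t
    have hL0 : 0 ≤ L := (hℓpos s hs).le.trans (hL s ⟨⟨le_rfl, hst⟩, hs⟩)
    have hNle : ∀ ρ ∈ Icc s t, ∀ x, N ρ x ≤ L * ‖x‖ := fun ρ hρ x =>
      (hNequiv ρ (hsub hρ) x).2.trans
        (mul_le_mul_of_nonneg_right (hL ρ ⟨hρ, hsub hρ⟩) (norm_nonneg x))
    have hΦcol : ∀ σ ∈ Ici τ₀, ContinuousOn (fun ρ => Φ ρ σ) (Icc s t) := fun σ hσ =>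
      hΦcont.comp (continuous_id.prodMk continuous_const).continuousOn fun ρ hρ => ⟨hsub hρ, hσ⟩
    have hcomp : ∀ ρ ∈ Icc s t, ∀ r ∈ Icc s t, Φ ρ r = (Φ ρ t).comp (Φ t r) :=
      fun ρ hρ r hr => hΦcomp ρ (hsub hρ) t ht r (hsub hr)
    have hY := eq_add_integral_apply hcomp hB (fun ρ hρ => hVar s hs ρ (hsub hρ) η) v
    have hGY : ∀ᵐ r ∂volume.restrict (Ioc s t), N r (B r v) ≤ M₁ * N r (Dsol r s η v) :=
      ae_restrict_of_ae_restrict_of_subset (fun r hr => hsub (Ioc_subset_Icc_self hr))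
        (hDFbound.mono fun r hr => hr _ _)
    exact seminorm_le_of_mild (G := fun r => B r v) (Y := fun ρ => Dsol ρ s η v) N hL0 hNle
      (by linarith) hM₁ (hΦcol s hs) (hΦcol t ht)
      (fun r hr ρ hρ hrρ x => hH1 r (hsub hr) ρ (hsub hρ) hrρ x) hcomp
      ((ContinuousLinearMap.apply ℝ X v).integrable_comp hB) hY hGY hst
  · -- The integral in the variational equation is then `0` by convention.
    have hvar := hVar s hs t ht η
    rw [intervalIntegral.integral_of_le hst, integral_undef hB, add_zero] at hvar
    have hKM : 0 ≤ K * M₁ := mul_nonneg (by linarith) hM₁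
    calc Nt t (Dsol t s η v) = Nt t (Φ t s v) := by rw [hvar]
      _ ≤ K * exp (-α * (t - s)) * Nt s v := hH1 s hs t ht hst v
      _ ≤ K * exp ((K * M₁ - α) * (t - s)) * Nt s v := by
          gcongr
          · exact apply_nonneg (N s) v
          · linarith

theorem statement14
    {X : Type*} [NormedAddCommGroup X] [NormedSpace ℝ X] [CompleteSpace X]
    (τ₀ : ℝ)
    (Nt : ℝ → X → ℝ)
    (hNadd : ∀ t : ℝ, ∀ x y : X, Nt t (x + y) ≤ Nt t x + Nt t y)
    (hNsmul : ∀ t : ℝ, ∀ c : ℝ, ∀ x : X, Nt t (c • x) = |c| * Nt t x)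
    (ℓ : ℝ → ℝ)
    (hℓpos : ∀ t ∈ Set.Ici τ₀, 0 < ℓ t)
    (hℓloc : ∀ a b : ℝ, ∃ C : ℝ, ∀ t ∈ Set.Icc a b ∩ Set.Ici τ₀, ℓ t ≤ C)
    (hNequiv : ∀ t ∈ Set.Ici τ₀, ∀ x : X, (1 / ℓ t) * ‖x‖ ≤ Nt t x ∧ Nt t x ≤ ℓ t * ‖x‖)
    (Φ : ℝ → ℝ → X →L[ℝ] X)
    (hΦcont : ContinuousOn (fun p : ℝ × ℝ => Φ p.1 p.2) (Set.Ici τ₀ ×ˢ Set.Ici τ₀))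
    (hΦid : ∀ t ∈ Set.Ici τ₀, Φ t t = ContinuousLinearMap.id ℝ X)
    (hΦcomp : ∀ t ∈ Set.Ici τ₀, ∀ r ∈ Set.Ici τ₀, ∀ s ∈ Set.Ici τ₀,
      Φ t s = (Φ t r).comp (Φ r s))
    (K α : ℝ) (hK : 1 ≤ K) (hα : 0 < α)
    (hH1 : ∀ s ∈ Set.Ici τ₀, ∀ t ∈ Set.Ici τ₀, s ≤ t → ∀ x : X,
      Nt t (Φ t s x) ≤ K * Real.exp (-α * (t - s)) * Nt s x)
    (F : ℝ → X → X)
    (hFmeas : ∀ x : X, StronglyMeasurable (fun t => F t x))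
    (hFcont : ∀ᵐ t ∂(volume.restrict (Set.Ici τ₀)), Continuous (F t))
    (DF : ℝ → X → X →L[ℝ] X)
    (hDF : ∀ᵐ t ∂(volume.restrict (Set.Ici τ₀)), ∀ x : X, HasFDerivAt (F t) (DF t x) x)
    (M₁ : ℝ) (hM₁ : 0 ≤ M₁)
    (hDFbound : ∀ᵐ t ∂(volume.restrict (Set.Ici τ₀)), ∀ x v : X,
      Nt t (DF t x v) ≤ M₁ * Nt t v)
    (sol : ℝ → ℝ → X → X)
    (hsolCont : ContinuousOn (fun p : ℝ × ℝ × X => sol p.1 p.2.1 p.2.2)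
      (Set.Ici τ₀ ×ˢ Set.Ici τ₀ ×ˢ (Set.univ : Set X)))
    (hsolId : ∀ τ ∈ Set.Ici τ₀, ∀ x : X, sol τ τ x = x)
    (hsolGrp : ∀ t₀ ∈ Set.Ici τ₀, ∀ t₁ ∈ Set.Ici τ₀, ∀ t₂ ∈ Set.Ici τ₀, ∀ x : X,
      sol t₂ t₀ x = sol t₂ t₁ (sol t₁ t₀ x))
    (hVOC : ∀ s ∈ Set.Ici τ₀, ∀ t ∈ Set.Ici τ₀, ∀ η : X,
      sol t s η = Φ t s η + ∫ r in s..t, Φ t r (F r (sol r s η)))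
    (Dsol : ℝ → ℝ → X → X →L[ℝ] X)
    (hDsol : ∀ s ∈ Set.Ici τ₀, ∀ t ∈ Set.Ici τ₀, ∀ η : X,
      HasFDerivAt (sol t s) (Dsol t s η) η)
    (hVar : ∀ s ∈ Set.Ici τ₀, ∀ t ∈ Set.Ici τ₀, ∀ η : X,
      Dsol t s η
        = Φ t s + ∫ r in s..t, (Φ t r).comp ((DF r (sol r s η)).comp (Dsol r s η)))
    :
    ∀ s ∈ Set.Ici τ₀, ∀ t ∈ Set.Ici τ₀, s ≤ t → ∀ η v : X,
      Nt t (Dsol t s η v) ≤ K * Real.exp ((K * M₁ - α) * (t - s)) * Nt s v :=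
  statement14_general τ₀ Nt hNadd hNsmul ℓ hℓpos hℓloc hNequiv Φ hΦcont hΦcomp K α hK hH1 DF M₁ hM₁
    hDFbound sol Dsol hVar
end
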